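/- arXiv:math/0409118 — 7 statements merged into one kernel-verified Lean document; each statement's English description precedes it below -/
import Mathlib

section
/- In the root system of type B_n, for each i the set Φ_i = {∑_{j=i}^k α_j : i ≤ k ≤ n} ∪ {∑_{j=k}^n α_j + ∑_{j=i}^n α_j : i+1 ≤ k ≤ n} has the property that for no two roots α, β ∈ Φ_i is α + β a root; consequently the subalgebra spanned by the root spaces g_α for α ∈ Φ_i is abelian. -/
/-- The coefficient vector of the sum of simple roots `α_a + α_{a+1} + ⋯ + α_b`
(roots are recorded by their coefficients on the simple roots `α_1, …, α_n`,
as functions `ℕ → ℤ`; indices are 1-based). -/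
def rvec (a b : ℕ) : ℕ → ℤ := fun j => if a ≤ j ∧ j ≤ b then 1 else 0
/-- Positive roots of type `B_n` (`α_n` the short simple root). -/
def posB (n : ℕ) : Set (ℕ → ℤ) :=
  {v | ∃ i k, 1 ≤ i ∧ i ≤ k ∧ k ≤ n ∧ v = rvec i k} ∪
  {v | ∃ i k, 1 ≤ i ∧ i < k ∧ k ≤ n ∧ v = rvec i n + rvec k n}

/-- All roots of type `B_n`. -/
def rootsB (n : ℕ) : Set (ℕ → ℤ) := posB n ∪ {v | -v ∈ posB n}

/-- The `i`-th row of positive roots in type `B_n`: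
`{∑_{j=i}^k α_j : i ≤ k ≤ n} ∪ {∑_{j=k}^n α_j + ∑_{j=i}^n α_j : i+1 ≤ k ≤ n}`. -/
def rowB (n i : ℕ) : Set (ℕ → ℤ) :=
  {v | ∃ k, i ≤ k ∧ k ≤ n ∧ v = rvec i k} ∪
  {v | ∃ k, i + 1 ≤ k ∧ k ≤ n ∧ v = rvec i n + rvec k n}

lemma rowB_val {n i : ℕ} {α : ℕ → ℤ} (hα : α ∈ rowB n i) :
    α i = 1 ∧ ∀ j, j < i → α j = 0 := by
  rcases hα with ⟨k, hik, hkn, rfl⟩ | ⟨k, hik, hkn, rfl⟩ <;>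
    refine ⟨?_, fun j hj => ?_⟩ <;>
      simp only [rvec, Pi.add_apply] <;> split_ifs <;> omega

lemma posB_nonneg {n : ℕ} {v : ℕ → ℤ} (hv : v ∈ posB n) (j : ℕ) : 0 ≤ v j := by
  rcases hv with ⟨a, b, _, _, _, rfl⟩ | ⟨a, c, _, _, _, rfl⟩ <;>
    simp only [rvec, Pi.add_apply] <;> split_ifs <;> omega

lemma rowB_sub {n i : ℕ} (h1 : 1 ≤ i) {α : ℕ → ℤ} (hα : α ∈ rowB n i) :
    α ∈ rootsB n := by
  rcases hα with ⟨k, hik, hkn, rfl⟩ | ⟨k, hik, hkn, rfl⟩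
  · exact Or.inl (Or.inl ⟨i, k, h1, hik, hkn, rfl⟩)
  · exact Or.inl (Or.inr ⟨i, k, h1, by omega, hkn, rfl⟩)

lemma row_sum_not_root {n i : ℕ} (h1 : 1 ≤ i) {α β : ℕ → ℤ}
    (hα : α ∈ rowB n i) (hβ : β ∈ rowB n i) : α + β ∉ rootsB n := by
  obtain ⟨hαi, hαlt⟩ := rowB_val hα
  obtain ⟨hβi, hβlt⟩ := rowB_val hβ
  rintro (h | h)
  · rcases h with ⟨a, b, ha, hab, hbn, hv⟩ | ⟨a, c, ha, hac, hcn, hv⟩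
    · have hvi := congrFun hv i
      simp only [Pi.add_apply, rvec, hαi, hβi] at hvi
      split_ifs at hvi <;> omega
    · have hvi := congrFun hv i
      have hva := congrFun hv a
      simp only [Pi.add_apply, rvec, hαi, hβi] at hvi hva
      by_cases hci : c ≤ i ∧ i ≤ n
      · have hai : a < i := lt_of_lt_of_le hac hci.1
        rw [hαlt a hai, hβlt a hai] at hva
        split_ifs at hva <;> omega
      · split_ifs at hvi <;> omega
  · have := posB_nonneg h i
    simp only [Pi.neg_apply, Pi.add_apply, hαi, hβi] at this
    omega

/-- In type `B_n`, for no two roots `α, β` of the `i`-th row is `α + β`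
a root; consequently, for any complex Lie algebra with root spaces `g α` indexed by the
roots of `B_n` and satisfying `[g α, g β] = 0` when `α + β` is not a root, the subalgebra
spanned by the root spaces of the `i`-th row is abelian. -/
theorem typeB_row_abelian (n i : ℕ) (h1 : 1 ≤ i) (h2 : i ≤ n)
    (L : Type*) [LieRing L] [LieAlgebra ℂ L] (g : (ℕ → ℤ) → Submodule ℂ L)
    (hbr : ∀ α ∈ rootsB n, ∀ β ∈ rootsB n, α + β ∉ rootsB n →
      ∀ x ∈ g α, ∀ y ∈ g β, ⁅x, y⁆ = 0) :
    (∀ α ∈ rowB n i, ∀ β ∈ rowB n i, α + β ∉ rootsB n) ∧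
    (∀ x ∈ ⨆ α ∈ rowB n i, g α, ∀ y ∈ ⨆ α ∈ rowB n i, g α, ⁅x, y⁆ = 0) := by
  have key : ∀ α ∈ rowB n i, ∀ β ∈ rowB n i, α + β ∉ rootsB n :=
    fun α hα β hβ => row_sum_not_root h1 hα hβ
  refine ⟨key, ?_⟩
  have hsub : ∀ x ∈ (⨆ α ∈ rowB n i, g α), ∀ β ∈ rowB n i, ∀ y ∈ g β, ⁅x, y⁆ = 0 := by
    intro x hx
    rw [iSup_subtype'] at hx
    refine Submodule.iSup_induction
      (motive := fun z => ∀ β ∈ rowB n i, ∀ y ∈ g β, ⁅z, y⁆ = 0) _ hx ?_ ?_ ?_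
    · rintro ⟨α, hα⟩ x hxα β hβ y hy
      exact hbr α (rowB_sub h1 hα) β (rowB_sub h1 hβ) (key α hα β hβ) x hxα y hy
    · intro β hβ y hy; simp
    · intro a b ha hb β hβ y hy
      rw [add_lie, ha β hβ y hy, hb β hβ y hy, add_zero]
  intro x hx y hy
  rw [iSup_subtype'] at hy
  refine Submodule.iSup_induction (motive := fun z => ⁅x, z⁆ = 0) _ hy ?_ ?_ ?_
  · rintro ⟨β, hβ⟩ z hzβ
    exact hsub x hx β hβ z hzβ
  · simp
  · intro a b ha hb; rw [lie_add, ha, hb, add_zero]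
end

section
/- In the root system of type C_n with i < n, let γ_i = 2α_i + 2α_{i+1} + ⋯ + 2α_{n-1} + α_n and let Φ_i = {∑_{j=i}^k α_j : i ≤ k ≤ n} ∪ {∑_{j=k}^{n-1} α_j + ∑_{j=i}^n α_j : i ≤ k ≤ n-1}. Then γ_i ∈ Φ_i, and for every α ∈ Φ_i with α ≠ γ_i, the difference γ_i − α is again a root in Φ_i; moreover for α, β ∈ Φ_i, the sum α + β is a root if and only if α + β = γ_i. -/
/-- Positive roots of type `C_n` (`α_n` the long simple root). -/
def posC (n : ℕ) : Set (ℕ → ℤ) :=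
  {v | ∃ i k, 1 ≤ i ∧ i ≤ k ∧ k ≤ n ∧ v = rvec i k} ∪
  {v | ∃ i k, 1 ≤ i ∧ i ≤ k ∧ k ≤ n - 1 ∧ v = rvec i n + rvec k (n - 1)}

/-- All roots of type `C_n`. -/
def rootsC (n : ℕ) : Set (ℕ → ℤ) := posC n ∪ {v | -v ∈ posC n}

/-- The `i`-th row of positive roots in type `C_n`:
`{∑_{j=i}^k α_j : i ≤ k ≤ n} ∪ {∑_{j=k}^{n-1} α_j + ∑_{j=i}^n α_j : i ≤ k ≤ n-1}`. -/
def rowC (n i : ℕ) : Set (ℕ → ℤ) :=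
  {v | ∃ k, i ≤ k ∧ k ≤ n ∧ v = rvec i k} ∪
  {v | ∃ k, i ≤ k ∧ k ≤ n - 1 ∧ v = rvec i n + rvec k (n - 1)}

/-- The root `γ_i = 2α_i + ⋯ + 2α_{n-1} + α_n` of type `C_n`. -/
def gammaC (n i : ℕ) : ℕ → ℤ := rvec i n + rvec i (n - 1)



lemma rvec_nonneg (a b j : ℕ) : 0 ≤ rvec a b j := by unfold rvec; split <;> omega
lemma rvec_le_one (a b j : ℕ) : rvec a b j ≤ 1 := by unfold rvec; split <;> omega
lemma rvec_eq_one {a b j : ℕ} (h : rvec a b j = 1) : a ≤ j ∧ j ≤ b := by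
  unfold rvec at h; split at h
  · assumption
  · omega

lemma posC_nonneg {n : ℕ} {v : ℕ → ℤ} (h : v ∈ posC n) (j : ℕ) : 0 ≤ v j := by
  obtain ⟨a,k,_,_,_,rfl⟩|⟨a,k,_,_,_,rfl⟩ := h
  · exact rvec_nonneg a k j
  · have := rvec_nonneg a n j; have := rvec_nonneg k (n-1) j
    simp only [Pi.add_apply]; omega

lemma rootsC_le_two {n : ℕ} {v : ℕ → ℤ} (h : v ∈ rootsC n) (j : ℕ) : v j ≤ 2 := by
  obtain h|h := h
  · obtain ⟨a,k,_,_,_,rfl⟩|⟨a,k,_,_,_,rfl⟩ := h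
    · have := rvec_le_one a k j; omega
    · have := rvec_le_one a n j; have := rvec_le_one k (n-1) j
      simp only [Pi.add_apply]; omega
  · have := posC_nonneg h j
    simp only [Pi.neg_apply] at this; omega

lemma row_lt {n i : ℕ} {v : ℕ → ℤ} (h : v ∈ rowC n i) {j : ℕ} (hj : j < i) : v j = 0 := by
  obtain ⟨k,hk1,hk2,rfl⟩|⟨k,hk1,hk2,rfl⟩ := h
  · unfold rvec; split <;> omega
  · simp only [Pi.add_apply]; unfold rvec; split <;> split <;> omega

lemma row_i {n i : ℕ} {v : ℕ → ℤ} (h : v ∈ rowC n i) : v i = 1 ∨ v = gammaC n i := by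
  obtain ⟨k,hk1,hk2,rfl⟩|⟨k,hk1,hk2,rfl⟩ := h
  · left; unfold rvec; split <;> omega
  · rcases hk1.lt_or_eq with hk|hk
    · left; simp only [Pi.add_apply]; unfold rvec; split <;> split <;> omega
    · right; rw [← hk]; rfl

lemma gamma_i {n i : ℕ} (h2 : i < n) : gammaC n i i = 2 := by
  simp only [gammaC, Pi.add_apply]; unfold rvec; split <;> split <;> omega

lemma key {n i : ℕ} (h1 : 1 ≤ i) (h2 : i < n) {w : ℕ → ℤ} (hw : w ∈ rootsC n)
    (hwi : w i = 2) (hlt : ∀ j < i, w j = 0) : w = gammaC n i := by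
  obtain h|h := hw
  · obtain ⟨a,k,ha,hak,hkn,rfl⟩|⟨a,k,ha,hak,hkn,rfl⟩ := h
    · have := rvec_le_one a k i; omega
    · simp only [Pi.add_apply] at hwi
      have hb1 := rvec_le_one a n i
      have hb2 := rvec_le_one k (n-1) i
      have hb3 := rvec_nonneg a n i
      have hb4 := rvec_nonneg k (n-1) i
      have e1 : rvec a n i = 1 := by omega
      have e2 : rvec k (n-1) i = 1 := by omega
      have h1' := rvec_eq_one e1
      have h2' := rvec_eq_one e2
      have hai : a = i := by
        by_contra hc
        have hlta : a < i := by omega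
        have := hlt a hlta
        simp only [Pi.add_apply] at this
        have : rvec a n a = 1 := by unfold rvec; split <;> omega
        have := rvec_nonneg k (n-1) a
        have h0 := hlt a hlta
        simp only [Pi.add_apply] at h0
        omega
      have hki : k = i := by omega
      rw [hai, hki]; rfl
  · have := posC_nonneg h i
    simp only [Pi.neg_apply] at this; omega

/-- In type `C_n` with `i < n`, `γ_i = 2α_i + ⋯ + 2α_{n-1} + α_n` belongs
to the `i`-th row `Φ_i`; for every `α ∈ Φ_i` with `α ≠ γ_i` the difference `γ_i - α` is
again a root in `Φ_i`; and for `α, β ∈ Φ_i` the sum `α + β` is a root iff `α + β = γ_i`. -/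
theorem typeC_row_heisenberg_combinatorics (n i : ℕ) (h1 : 1 ≤ i) (h2 : i < n) :
    gammaC n i ∈ rowC n i ∧
    (∀ α ∈ rowC n i, α ≠ gammaC n i → gammaC n i - α ∈ rowC n i) ∧
    (∀ α ∈ rowC n i, ∀ β ∈ rowC n i, (α + β ∈ rootsC n ↔ α + β = gammaC n i)) := by
  refine ⟨Or.inr ⟨i, le_refl i, by omega, rfl⟩, ?_, ?_⟩
  · intro α hα hne
    obtain ⟨k,hk1,hk2,rfl⟩|⟨k,hk1,hk2,rfl⟩ := hα
    · by_cases hk : k = n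
      · refine Or.inl ⟨n-1, by omega, by omega, ?_⟩
        funext j
        simp only [gammaC, Pi.sub_apply, Pi.add_apply]; unfold rvec
        split_ifs <;> omega
      · by_cases hk' : k = n - 1
        · refine Or.inl ⟨n, by omega, le_refl n, ?_⟩
          funext j
          simp only [gammaC, Pi.sub_apply, Pi.add_apply]; unfold rvec
          split_ifs <;> omega
        · refine Or.inr ⟨k+1, by omega, by omega, ?_⟩
          funext j
          simp only [gammaC, Pi.sub_apply, Pi.add_apply]; unfold rvec
          split_ifs <;> omega
    · rcases hk1.lt_or_eq with hk|hk
      · refine Or.inl ⟨k-1, by omega, by omega, ?_⟩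
        funext j
        simp only [gammaC, Pi.sub_apply, Pi.add_apply]; unfold rvec
        split_ifs <;> omega
      · exfalso; apply hne; rw [← hk]; rfl
  · intro α hα β hβ
    have hγi := gamma_i (i := i) h2
    rcases row_i hα with hαi | hαγ
    · rcases row_i hβ with hβi | hβγ
      · constructor
        · intro hroot
          refine key h1 h2 hroot ?_ ?_
          · simp only [Pi.add_apply]; omega
          · intro j hj
            simp only [Pi.add_apply, row_lt hα hj, row_lt hβ hj]; ring
        · intro heq
          rw [heq]
          exact Or.inl (Or.inr ⟨i, i, h1, le_refl i, by omega, rfl⟩)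
      · have hb : (α + β) i = α i + 2 := by
          simp only [Pi.add_apply, hβγ, hγi]
        constructor
        · intro hroot
          have := rootsC_le_two hroot i; omega
        · intro heq
          exfalso; rw [heq] at hb; omega
    · have hb : (α + β) i = 2 + β i := by
        simp only [Pi.add_apply, hαγ, hγi]
      have hβ1 : 1 ≤ β i := by
        rcases row_i hβ with h | h
        · omega
        · rw [h]; omega
      constructor
      · intro hroot
        have := rootsC_le_two hroot i; omega
      · intro heq
        exfalso; rw [heq] at hb; omega
end

section
/- In any classical root system of type A_n, B_n, C_n, or D_n, the sets Φ_1, ..., Φ_n defined by Φ_i = {α ∈ Φ⁺ : α ≥ α_i, and α is not strictly greater than α_j for any j < i} form a partition of the set of positive roots Φ⁺. -/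
/-- Positive roots of type `A_n`: the intervals `α_i + ⋯ + α_k`, `1 ≤ i ≤ k ≤ n`. -/
def posA (n : ℕ) : Set (ℕ → ℤ) :=
  {v | ∃ i k, 1 ≤ i ∧ i ≤ k ∧ k ≤ n ∧ v = rvec i k}
/-- Positive roots of type `D_n` (`α_{n-1}`, `α_n` the two end nodes adjacent to `α_{n-2}`). -/
def posD (n : ℕ) : Set (ℕ → ℤ) :=
  {v | ∃ i k, 1 ≤ i ∧ i ≤ k ∧ k ≤ n - 1 ∧ v = rvec i k} ∪
  {v | ∃ i k, 1 ≤ i ∧ i + 1 ≤ k ∧ k ≤ n ∧ v = rvec i (n - 2) + rvec n n + rvec k (n - 1)}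
/-- `d` is a (possibly empty) sum of elements of `P` (the positive roots). -/
def isSumOf (P : Set (ℕ → ℤ)) (d : ℕ → ℤ) : Prop := d ∈ AddSubmonoid.closure P

/-- The strict partial order on roots: `α > β` iff `α - β` is a nonzero sum of
positive roots. -/
def rootGt (P : Set (ℕ → ℤ)) (α β : ℕ → ℤ) : Prop := α ≠ β ∧ isSumOf P (α - β)

/-- `α ≥ β` iff `α > β` or `α = β`. -/
def rootGe (P : Set (ℕ → ℤ)) (α β : ℕ → ℤ) : Prop := α = β ∨ rootGt P α β

/-- The `i`-th row determined by a set of positive roots `P` with simple roots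
`α_j = rvec j j`: the positive roots `α` with `α ≥ α_i` and `α` not strictly greater
than `α_j` for any `j < i`. -/
def rowOf (P : Set (ℕ → ℤ)) (i : ℕ) : Set (ℕ → ℤ) :=
  {α ∈ P | rootGe P α (rvec i i) ∧ ∀ j, 1 ≤ j → j < i → ¬ rootGt P α (rvec j j)}
section Aux

/-- `rvec a b = 0` when `b < a`. -/
lemma rvec_zero {a b : ℕ} (h : b < a) : rvec a b = 0 := by
  funext j; simp only [rvec, Pi.zero_apply]; split <;> omega

lemma rvec_split {a b c : ℕ} (h1 : a ≤ b) (h2 : b ≤ c) :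
    rvec a c = rvec a b + rvec (b + 1) c := by
  funext j; simp only [rvec, Pi.add_apply]; split_ifs <;> omega

lemma rvec_sub_simple {a b : ℕ} (h : a ≤ b) :
    rvec a b - rvec a a = rvec (a + 1) b := by
  rw [rvec_split (le_refl a) h]; abel

/-- Every element of the closure of a set of nonnegative vectors is nonnegative. -/
lemma closure_nonneg {P : Set (ℕ → ℤ)} (hnn : ∀ v ∈ P, ∀ j, 0 ≤ v j)
    {d : ℕ → ℤ} (hd : isSumOf P d) : ∀ j, 0 ≤ d j := by
  induction hd using AddSubmonoid.closure_induction with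
  | mem y hy => exact hnn y hy
  | zero => intro j; simp
  | add a b _ _ pa pb => intro j; have := pa j; have := pb j
                         simp only [Pi.add_apply]; omega

lemma not_gt_of_coord_zero {P : Set (ℕ → ℤ)} (hnn : ∀ v ∈ P, ∀ j, 0 ≤ v j)
    {α : ℕ → ℤ} {j : ℕ} (hj : α j = 0) : ¬ rootGt P α (rvec j j) := by
  rintro ⟨-, hsum⟩
  have h := closure_nonneg hnn hsum j
  simp only [Pi.sub_apply, hj, rvec] at h
  rw [if_pos ⟨le_refl j, le_refl j⟩] at h; omega

lemma row_unique {P : Set (ℕ → ℤ)} (hnn : ∀ v ∈ P, ∀ j, 0 ≤ v j)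
    {α : ℕ → ℤ} {m₁ m₂ : ℕ} (h₁ : 1 ≤ m₁) (h₂ : 1 ≤ m₂)
    (hr₁ : α ∈ rowOf P m₁) (hr₂ : α ∈ rowOf P m₂) : m₁ = m₂ := by
  by_contra hne
  wlog hlt : m₁ < m₂ generalizing m₁ m₂
  · exact this h₂ h₁ hr₂ hr₁ (Ne.symm hne) (by omega)
  obtain ⟨-, hge₁, -⟩ := hr₁
  obtain ⟨-, hge₂, hnot₂⟩ := hr₂
  rcases hge₁ with heq₁ | hgt₁
  · have hα2 : α m₂ = 0 := by
      rw [heq₁]; simp only [rvec]; split <;> omega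
    rcases hge₂ with heq₂ | hgt₂
    · have : α m₂ = 1 := by rw [heq₂]; simp [rvec]
      omega
    · have h := closure_nonneg hnn hgt₂.2 m₂
      simp only [Pi.sub_apply, hα2, rvec] at h
      rw [if_pos ⟨le_refl m₂, le_refl m₂⟩] at h; omega
  · exact hnot₂ m₁ h₁ hlt hgt₁

lemma row_exists_unique {n : ℕ} {P : Set (ℕ → ℤ)}
    (hnn : ∀ v ∈ P, ∀ j, 0 ≤ v j)
    {α : ℕ → ℤ} (hα : α ∈ P) (i : ℕ) (h1 : 1 ≤ i) (h2 : i ≤ n)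
    (hz : ∀ j, j < i → α j = 0)
    (hs : isSumOf P (α - rvec i i)) :
    ∃! m : ℕ, 1 ≤ m ∧ m ≤ n ∧ α ∈ rowOf P m := by
  have hrow : α ∈ rowOf P i := by
    refine ⟨hα, ?_, ?_⟩
    · by_cases he : α = rvec i i
      · exact Or.inl he
      · exact Or.inr ⟨he, hs⟩
    · intro j _ hji
      exact not_gt_of_coord_zero hnn (hz j hji)
  exact ⟨i, ⟨h1, h2, hrow⟩, fun m hm => row_unique hnn hm.1 h1 hm.2.2 hrow⟩

lemma hz_rvec {i b : ℕ} : ∀ j, j < i → rvec i b j = 0 := by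
  intro j hj; simp only [rvec]; split <;> omega

end Aux

/-- In each classical root system (type `A_n`, `B_n`, `C_n` or `D_n`),
the rows `Φ_1, …, Φ_n` partition the positive roots: every positive root lies in
exactly one row. -/
theorem rows_partition_positive_roots (n : ℕ) (hn : 1 ≤ n)
    (P : Set (ℕ → ℤ)) (hP : P = posA n ∨ P = posB n ∨ P = posC n ∨ P = posD n) :
    ∀ α ∈ P, ∃! i : ℕ, 1 ≤ i ∧ i ≤ n ∧ α ∈ rowOf P i := by
  rcases hP with rfl | rfl | rfl | rfl
  · -- Type A
    have hnn : ∀ v ∈ posA n, ∀ j, 0 ≤ v j := by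
      rintro v ⟨i, k, -, -, -, rfl⟩ j; exact rvec_nonneg _ _ _
    rintro α ⟨i, k, hi1, hik, hkn, rfl⟩
    refine row_exists_unique hnn ⟨i, k, hi1, hik, hkn, rfl⟩ i hi1 (le_trans hik hkn)
      (fun j hj => hz_rvec j hj) ?_
    rw [rvec_sub_simple hik]
    by_cases h : i = k
    · rw [rvec_zero (by omega)]; exact zero_mem _
    · exact AddSubmonoid.subset_closure ⟨i + 1, k, by omega, by omega, hkn, rfl⟩
  · -- Type B
    have hnn : ∀ v ∈ posB n, ∀ j, 0 ≤ v j := by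
      rintro v (⟨i, k, -, -, -, rfl⟩ | ⟨i, k, -, -, -, rfl⟩) j
      · exact rvec_nonneg _ _ _
      · have := rvec_nonneg i n j; have := rvec_nonneg k n j
        simp only [Pi.add_apply]; omega
    rintro α (⟨i, k, hi1, hik, hkn, rfl⟩ | ⟨i, k, hi1, hik, hkn, rfl⟩)
    · refine row_exists_unique hnn (Or.inl ⟨i, k, hi1, hik, hkn, rfl⟩) i hi1
        (le_trans hik hkn) (fun j hj => hz_rvec j hj) ?_
      rw [rvec_sub_simple hik]
      by_cases h : i = k
      · rw [rvec_zero (by omega)]; exact zero_mem _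
      · exact AddSubmonoid.subset_closure (Or.inl ⟨i + 1, k, by omega, by omega, hkn, rfl⟩)
    · refine row_exists_unique hnn (Or.inr ⟨i, k, hi1, hik, hkn, rfl⟩) i hi1 (by omega)
        ?_ ?_
      · intro j hj
        simp only [Pi.add_apply, hz_rvec j hj, hz_rvec j (show j < k by omega)]; ring
      · have e : rvec i n + rvec k n - rvec i i = rvec (i + 1) n + rvec k n := by
          rw [← rvec_sub_simple (show i ≤ n by omega)]; abel
        rw [e]
        exact add_mem
          (AddSubmonoid.subset_closure (Or.inl ⟨i + 1, n, by omega, by omega, le_refl n, rfl⟩))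
          (AddSubmonoid.subset_closure (Or.inl ⟨k, n, by omega, hkn, le_refl n, rfl⟩))
  · -- Type C
    have hnn : ∀ v ∈ posC n, ∀ j, 0 ≤ v j := by
      rintro v (⟨i, k, -, -, -, rfl⟩ | ⟨i, k, -, -, -, rfl⟩) j
      · exact rvec_nonneg _ _ _
      · have := rvec_nonneg i n j; have := rvec_nonneg k (n - 1) j
        simp only [Pi.add_apply]; omega
    rintro α (⟨i, k, hi1, hik, hkn, rfl⟩ | ⟨i, k, hi1, hik, hkn, rfl⟩)
    · refine row_exists_unique hnn (Or.inl ⟨i, k, hi1, hik, hkn, rfl⟩) i hi1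
        (le_trans hik hkn) (fun j hj => hz_rvec j hj) ?_
      rw [rvec_sub_simple hik]
      by_cases h : i = k
      · rw [rvec_zero (by omega)]; exact zero_mem _
      · exact AddSubmonoid.subset_closure (Or.inl ⟨i + 1, k, by omega, by omega, hkn, rfl⟩)
    · refine row_exists_unique hnn (Or.inr ⟨i, k, hi1, hik, hkn, rfl⟩) i hi1 (by omega)
        ?_ ?_
      · intro j hj
        simp only [Pi.add_apply, hz_rvec j hj, hz_rvec j (show j < k by omega)]; ring
      · have e : rvec i n + rvec k (n - 1) - rvec i i = rvec (i + 1) n + rvec k (n - 1) := by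
          rw [← rvec_sub_simple (show i ≤ n by omega)]; abel
        rw [e]
        exact add_mem
          (AddSubmonoid.subset_closure (Or.inl ⟨i + 1, n, by omega, by omega, le_refl n, rfl⟩))
          (AddSubmonoid.subset_closure (Or.inl ⟨k, n - 1, by omega, hkn, by omega, rfl⟩))
  · -- Type D
    have hnn : ∀ v ∈ posD n, ∀ j, 0 ≤ v j := by
      rintro v (⟨i, k, -, -, -, rfl⟩ | ⟨i, k, -, -, -, rfl⟩) j
      · exact rvec_nonneg _ _ _
      · have := rvec_nonneg i (n - 2) j; have := rvec_nonneg n n j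
        have := rvec_nonneg k (n - 1) j
        simp only [Pi.add_apply]; omega
    rintro α (⟨i, k, hi1, hik, hkn, rfl⟩ | ⟨i, k, hi1, hik, hkn, rfl⟩)
    · refine row_exists_unique hnn (Or.inl ⟨i, k, hi1, hik, hkn, rfl⟩) i hi1
        (by omega) (fun j hj => hz_rvec j hj) ?_
      rw [rvec_sub_simple hik]
      by_cases h : i = k
      · rw [rvec_zero (by omega)]; exact zero_mem _
      · exact AddSubmonoid.subset_closure (Or.inl ⟨i + 1, k, by omega, by omega, hkn, rfl⟩)
    · by_cases hcase : i ≤ n - 2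
      · refine row_exists_unique hnn (Or.inr ⟨i, k, hi1, hik, hkn, rfl⟩) i hi1 (by omega)
          ?_ ?_
        · intro j hj
          simp only [Pi.add_apply, hz_rvec j hj, hz_rvec j (show j < n by omega),
            hz_rvec j (show j < k by omega)]
          ring
        · have e1 : rvec i (n - 2) + rvec n n + rvec k (n - 1) - rvec i i
              = rvec (i + 1) (n - 2) + rvec n n + rvec k (n - 1) := by
            rw [← rvec_sub_simple hcase]; abel
          rw [e1]
          by_cases h : i + 1 < k
          · exact AddSubmonoid.subset_closure (Or.inr ⟨i + 1, k, by omega, h, hkn, rfl⟩)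
          · have hk : k = i + 1 := by omega
            have e2 : rvec (i + 1) (n - 2) + rvec n n + rvec k (n - 1)
                = (rvec k (n - 2) + rvec n n + rvec (k + 1) (n - 1)) + rvec k k := by
              funext j
              simp only [rvec, Pi.add_apply]
              split_ifs <;> omega
            rw [e2]
            exact add_mem
              (AddSubmonoid.subset_closure
                (Or.inr ⟨k, k + 1, by omega, le_refl _, by omega, rfl⟩))
              (AddSubmonoid.subset_closure (Or.inl ⟨k, k, by omega, le_refl _, by omega, rfl⟩))
      · have hi : i = n - 1 := by omega
        have hα : rvec i (n - 2) + rvec n n + rvec k (n - 1) = rvec n n := by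
          have hk : k = n := by omega
          funext j
          simp only [rvec, Pi.add_apply]
          split_ifs <;> omega
        refine row_exists_unique hnn (Or.inr ⟨i, k, hi1, hik, hkn, rfl⟩) n hn (le_refl n)
          ?_ ?_
        · rw [hα]; exact fun j hj => hz_rvec j hj
        · rw [hα, sub_self]; exact zero_mem _
end

section
/- Let Φ be a classical root system with positive roots Φ⁺, let Φ_H ⊆ Φ be a set of roots containing Φ⁺ such that the corresponding subspace H = t ⊕ ⊕_{α∈Φ_H} g_α is closed under bracket with the Borel b (equivalently, α ∈ Φ_H and β ∈ Φ⁺ with α + β ∈ Φ implies α + β ∈ Φ_H). Let w be a Weyl group element with w⁻¹α_j ∈ Φ_H for every simple root α_j. If α is a positive root with w⁻¹α ∉ Φ_H and α_j is a simple root such that α − α_j is a root, then α − α_j is a positive root and w⁻¹(α − α_j) is a negative root. -/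
/-- Let `Φ` be a (classical) root system with positive roots `Φpos` and
simple roots `Δ`, and `ΦH ⊇ Φpos` the index set of a Hessenberg space (closed under
adding positive roots when the sum is a root).  Let `w` be a Weyl group element
(an additive automorphism preserving `Φ`) with `w⁻¹ α_j ∈ ΦH` for every simple root.
If `α` is a positive root with `w⁻¹ α ∉ ΦH` and `α_j` is a simple root such that
`α - α_j` is a root, then `α - α_j` is positive and `w⁻¹(α - α_j)` is negative. -/
theorem hessenberg_containment_lemma {V : Type*} [AddCommGroup V]
    (Φ Φpos Δ ΦH : Set V) (w : V ≃+ V)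
    (hposΦ : Φpos ⊆ Φ) (hΔ : Δ ⊆ Φpos)
    (hpm : ∀ β ∈ Φ, β ∈ Φpos ∨ -β ∈ Φpos)
    (hsimple : ∀ αj ∈ Δ, ∀ β ∈ Φpos, ∀ γ ∈ Φpos, β + γ ≠ αj)
    (hHpos : Φpos ⊆ ΦH) (hHΦ : ΦH ⊆ Φ)
    (hclosed : ∀ α ∈ ΦH, ∀ β ∈ Φpos, α + β ∈ Φ → α + β ∈ ΦH)
    (hw : w '' Φ = Φ)
    (hwsimple : ∀ αj ∈ Δ, w.symm αj ∈ ΦH)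
    (α : V) (hα : α ∈ Φpos) (hαH : w.symm α ∉ ΦH)
    (αj : V) (hαj : αj ∈ Δ) (hroot : α - αj ∈ Φ) :
    α - αj ∈ Φpos ∧ -(w.symm (α - αj)) ∈ Φpos := by
  have hpos : α - αj ∈ Φpos := by
    rcases hpm _ hroot with h | h
    · exact h
    · exact absurd (by abel : α + -(α - αj) = αj) (hsimple αj hαj α hα _ h)
  refine ⟨hpos, ?_⟩
  have hmem : w.symm (α - αj) ∈ Φ := by
    have : α - αj ∈ w '' Φ := by rw [hw]; exact hroot
    rcases this with ⟨y, hy, hyw⟩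
    simpa [← hyw] using hy
  rcases hpm _ hmem with h | h
  · exfalso
    apply hαH
    have := hclosed _ (hwsimple αj hαj) _ h ?_
    · simpa [← map_add, sub_add_cancel, add_sub_cancel] using this
    · have : w.symm αj + w.symm (α - αj) = w.symm α := by
        rw [← map_add]; congr 1; abel
      rw [this]
      have : α ∈ w '' Φ := by rw [hw]; exact hposΦ hα
      rcases this with ⟨y, hy, hyw⟩
      simpa [← hyw] using hy
  · exact h
end

section
/- Let N ∈ gl_n(ℂ) be the regular nilpotent Jordan block (N_{i,i+1} = 1, other entries 0) and let h be a Hessenberg function. For a permutation w ∈ S_n, there exists an invertible matrix g with g⁻¹Ng ∈ H (the Hessenberg space of h) and g in the Bruhat cell BwB if and only if the cell BwB/B intersects the Hessenberg variety {flags V_• : N V_i ⊆ V_{h(i)}}; a necessary condition is that w⁻¹(e_i − e_{i+1}) ∈ Φ_H for all 1 ≤ i ≤ n−1, i.e., w⁻¹(i) ≤ h(w⁻¹(i+1)) for all i. -/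
/-- The permutation matrix of `w`. -/
def permMat (n : ℕ) (w : Equiv.Perm (Fin n)) : Matrix (Fin n) (Fin n) ℂ :=
  Matrix.of fun i j => if w j = i then 1 else 0

/-- The Borel subgroup: invertible upper-triangular matrices. -/
def upperBorel (n : ℕ) : Set (Matrix (Fin n) (Fin n) ℂ) :=
  {b | IsUnit b ∧ ∀ i j : Fin n, j < i → b i j = 0}

/-- The Bruhat cell `BwB`. -/
def bruhatCell (n : ℕ) (w : Equiv.Perm (Fin n)) : Set (Matrix (Fin n) (Fin n) ℂ) :=
  {g | ∃ b₁ ∈ upperBorel n, ∃ b₂ ∈ upperBorel n, g = b₁ * permMat n w * b₂}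

/-- The span of the columns of `g` with index at most `i`
(the `i`-th space of the flag associated to `g`). -/
noncomputable def colSpan (n : ℕ) (g : Matrix (Fin n) (Fin n) ℂ) (i : Fin n) :
    Submodule ℂ (Fin n → ℂ) :=
  Submodule.span ℂ ((fun j => fun r => g r j) '' {j : Fin n | j ≤ i})

section auxLemmas
variable {n : ℕ}

lemma permMat_mul_apply (w : Equiv.Perm (Fin n)) (C : Matrix (Fin n) (Fin n) ℂ) (i j : Fin n) :
    (permMat n w * C) i j = C (w⁻¹ i) j := by
  simp only [permMat, Matrix.mul_apply, Matrix.of_apply, ite_mul, one_mul, zero_mul]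
  rw [Finset.sum_eq_single (w⁻¹ i)]
  · simp
  · intro k _ hk
    rw [if_neg]
    intro hwk
    exact hk (by simp [← hwk])
  · simp

lemma mul_permMat_apply (w : Equiv.Perm (Fin n)) (C : Matrix (Fin n) (Fin n) ℂ) (i j : Fin n) :
    (C * permMat n w) i j = C i (w j) := by
  simp only [permMat, Matrix.mul_apply, Matrix.of_apply, mul_ite, mul_one, mul_zero]
  rw [Finset.sum_eq_single (w j)]
  · simp
  · intro k _ hk
    exact if_neg fun hwk => hk hwk.symm
  · simp

lemma permMat_mul_inv_eq_one (w : Equiv.Perm (Fin n)) :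
    permMat n w * permMat n w⁻¹ = 1 := by
  ext i j
  rw [mul_permMat_apply]
  simp only [permMat, Matrix.of_apply, Matrix.one_apply, Equiv.Perm.coe_inv, Equiv.apply_symm_apply]
  by_cases hij : i = j <;> simp [hij, eq_comm]

lemma permMat_inv (w : Equiv.Perm (Fin n)) : (permMat n w)⁻¹ = permMat n w⁻¹ :=
  Matrix.inv_eq_right_inv (permMat_mul_inv_eq_one w)

lemma permMat_isUnit (w : Equiv.Perm (Fin n)) : IsUnit (permMat n w) :=
  ⟨⟨permMat n w, permMat n w⁻¹, permMat_mul_inv_eq_one w,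
    by simpa using permMat_mul_inv_eq_one w⁻¹⟩, rfl⟩

lemma upperBorel_inv {b : Matrix (Fin n) (Fin n) ℂ} (hb : b ∈ upperBorel n) :
    b⁻¹ ∈ upperBorel n := by
  haveI := hb.1.invertible
  have hbt : b.BlockTriangular (id : Fin n → Fin n) := fun i j hij => hb.2 i j hij
  have := Matrix.blockTriangular_inv_of_blockTriangular hbt
  refine ⟨?_, fun i j hij => this hij⟩
  have hdet : IsUnit b.det := (Matrix.isUnit_iff_isUnit_det _).mp hb.1
  exact ⟨⟨b⁻¹, b, Matrix.nonsing_inv_mul _ hdet, Matrix.mul_nonsing_inv _ hdet⟩, rfl⟩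

lemma borel_diag_mul {b : Matrix (Fin n) (Fin n) ℂ} (hb : b ∈ upperBorel n) (i : Fin n) :
    b⁻¹ i i * b i i = 1 := by
  have hdet : IsUnit b.det := (Matrix.isUnit_iff_isUnit_det _).mp hb.1
  have h1 : b⁻¹ * b = 1 := Matrix.nonsing_inv_mul _ hdet
  have h2 := congrFun (congrFun h1 i) i
  rw [Matrix.mul_apply, Finset.sum_eq_single i] at h2
  · simpa using h2
  · intro k _ hk
    rcases lt_or_gt_of_ne hk with hlt | hgt
    · rw [(upperBorel_inv hb).2 i k hlt, zero_mul]
    · rw [hb.2 k i hgt, mul_zero]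
  · simp

lemma hess_conj {h : Fin n → Fin n} (hmono : Monotone h)
    {A u v : Matrix (Fin n) (Fin n) ℂ}
    (hA : ∀ i j, h j < i → A i j = 0)
    (hu : ∀ i j : Fin n, j < i → u i j = 0) (hv : ∀ i j : Fin n, j < i → v i j = 0)
    (i j : Fin n) (hij : h j < i) : (u * A * v) i j = 0 := by
  rw [Matrix.mul_apply]
  refine Finset.sum_eq_zero fun l _ => ?_
  rcases le_or_gt l j with hl | hl
  · rw [Matrix.mul_apply, Finset.sum_eq_zero, zero_mul]
    intro k _
    rcases le_or_gt i k with hk | hk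
    · rw [hA k l (lt_of_le_of_lt (hmono hl) (lt_of_lt_of_le hij hk)), mul_zero]
    · rw [hu i k hk, zero_mul]
  · rw [hv l j hl, mul_zero]

lemma N_mul_apply {b N : Matrix (Fin n) (Fin n) ℂ}
    (hN : N = Matrix.of fun i j => if i.val + 1 = j.val then (1 : ℂ) else 0)
    (k j : Fin n) :
    (N * b) k j = if hk : k.val + 1 < n then b ⟨k.val + 1, hk⟩ j else 0 := by
  subst hN
  rw [Matrix.mul_apply]
  by_cases hk : k.val + 1 < n
  · rw [dif_pos hk, Finset.sum_eq_single ⟨k.val + 1, hk⟩]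
    · simp
    · intro l _ hl
      rw [Matrix.of_apply, if_neg, zero_mul]
      intro hc
      exact hl (Fin.ext hc.symm)
    · simp
  · rw [dif_neg hk]
    refine Finset.sum_eq_zero fun l _ => ?_
    rw [Matrix.of_apply, if_neg, zero_mul]
    intro hc
    exact hk (hc ▸ l.isLt)

lemma conj_superdiag_ne_zero {b N : Matrix (Fin n) (Fin n) ℂ} (hb : b ∈ upperBorel n)
    (hN : N = Matrix.of fun i j => if i.val + 1 = j.val then (1 : ℂ) else 0)
    (i : Fin n) (hi : i.val + 1 < n) :
    (b⁻¹ * N * b) i ⟨i.val + 1, hi⟩ ≠ 0 := by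
  set i' : Fin n := ⟨i.val + 1, hi⟩ with hi'
  have key : (b⁻¹ * N * b) i i' = b⁻¹ i i * b i' i' := by
    rw [Matrix.mul_assoc, Matrix.mul_apply, Finset.sum_eq_single i]
    · rw [N_mul_apply hN, dif_pos hi]
    · intro k _ hk
      rcases lt_or_gt_of_ne hk with hlt | hgt
      · rw [(upperBorel_inv hb).2 i k hlt, zero_mul]
      · rw [N_mul_apply hN]
        by_cases hk2 : k.val + 1 < n
        · have hlt' : i' < ⟨k.val + 1, hk2⟩ := by
            rw [Fin.lt_def]
            exact Nat.succ_lt_succ (Fin.lt_def.mp hgt)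
          rw [dif_pos hk2, hb.2 ⟨k.val + 1, hk2⟩ i' hlt', mul_zero]
        · rw [dif_neg hk2, mul_zero]
    · simp
  rw [key]
  have h1 := borel_diag_mul hb i
  have h2 := borel_diag_mul hb i'
  intro hc
  rcases mul_eq_zero.mp hc with hc | hc
  · rw [hc, zero_mul] at h1; exact zero_ne_one h1
  · rw [hc, mul_zero] at h2; exact zero_ne_one h2

/-- Linear map truncating a vector to coordinates `≤ m`. -/
def maskMap (n : ℕ) (m : Fin n) : (Fin n → ℂ) →ₗ[ℂ] (Fin n → ℂ) where
  toFun c := fun k => if k ≤ m then c k else 0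
  map_add' c d := by ext k; by_cases hk : k ≤ m <;> simp [hk]
  map_smul' a c := by ext k; by_cases hk : k ≤ m <;> simp [hk]

lemma matrix_to_flag {h : Fin n → Fin n} (hmono : Monotone h)
    {N g : Matrix (Fin n) (Fin n) ℂ} (hgu : IsUnit g)
    (hA : ∀ i j, h j < i → (g⁻¹ * N * g) i j = 0) (i : Fin n) :
    Submodule.map N.mulVecLin (colSpan n g i) ≤ colSpan n g (h i) := by
  have hdet : IsUnit g.det := (Matrix.isUnit_iff_isUnit_det _).mp hgu
  have hgA : g * (g⁻¹ * N * g) = N * g := by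
    rw [← Matrix.mul_assoc, ← Matrix.mul_assoc, Matrix.mul_nonsing_inv _ hdet, Matrix.one_mul]
  rw [colSpan, Submodule.map_span, Submodule.span_le]
  rintro x ⟨y, ⟨j, hj, rfl⟩, rfl⟩
  have hcol : N.mulVecLin (fun r => g r j) = ∑ k, (g⁻¹ * N * g) k j • (fun r => g r k) := by
    ext r
    simp only [Matrix.mulVecLin_apply, Matrix.mulVec, dotProduct, Finset.sum_apply,
      Pi.smul_apply, smul_eq_mul]
    have h1 : (∑ l, N r l * g l j) = (N * g) r j := (Matrix.mul_apply).symm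
    rw [h1, ← hgA, Matrix.mul_apply]
    exact Finset.sum_congr rfl fun k _ => mul_comm _ _
  rw [SetLike.mem_coe, hcol]
  refine Submodule.sum_mem _ fun k _ => ?_
  by_cases hk : k ≤ h i
  · exact Submodule.smul_mem _ _ (Submodule.subset_span ⟨k, hk, rfl⟩)
  · rw [hA k j (lt_of_le_of_lt (hmono hj) (not_le.mp hk)), zero_smul]
    exact Submodule.zero_mem _

lemma flag_to_matrix {h : Fin n → Fin n}
    {N g : Matrix (Fin n) (Fin n) ℂ} (hgu : IsUnit g)
    (hF : ∀ i, Submodule.map N.mulVecLin (colSpan n g i) ≤ colSpan n g (h i)) :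
    ∀ i j, h j < i → (g⁻¹ * N * g) i j = 0 := by
  intro i j hij
  have hdet : IsUnit g.det := (Matrix.isUnit_iff_isUnit_det _).mp hgu
  have hgA : g * (g⁻¹ * N * g) = N * g := by
    rw [← Matrix.mul_assoc, ← Matrix.mul_assoc, Matrix.mul_nonsing_inv _ hdet, Matrix.one_mul]
  have hmem : N.mulVecLin (fun r => g r j) ∈ colSpan n g (h j) :=
    hF j ⟨_, Submodule.subset_span ⟨j, le_refl j, rfl⟩, rfl⟩
  have hrange : colSpan n g (h j) ≤ LinearMap.range (g.mulVecLin ∘ₗ maskMap n (h j)) := by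
    rw [colSpan, Submodule.span_le]
    rintro x ⟨k, hk, rfl⟩
    refine ⟨Pi.single k 1, ?_⟩
    ext r
    simp only [LinearMap.comp_apply, maskMap, LinearMap.coe_mk, AddHom.coe_mk,
      Matrix.mulVecLin_apply, Matrix.mulVec, dotProduct]
    rw [Finset.sum_eq_single k]
    · rw [if_pos (Set.mem_setOf.mp hk), Pi.single_eq_same, mul_one]
    · intro l _ hl
      simp [Pi.single_eq_of_ne hl]
    · simp
  obtain ⟨c, hc⟩ := hrange hmem
  have hNcol : N.mulVecLin (fun r => g r j) =
      g.mulVec ((g⁻¹ * N * g).mulVec (Pi.single j 1)) := by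
    have hcolj : (fun r => g r j) = g.mulVec (Pi.single j 1) := by
      ext r; simp [Matrix.mulVec_single]
    rw [Matrix.mulVecLin_apply, hcolj, Matrix.mulVec_mulVec, Matrix.mulVec_mulVec, hgA]
  have hceq : (maskMap n (h j)) c = (g⁻¹ * N * g).mulVec (Pi.single j 1) := by
    have h1 : g.mulVec ((maskMap n (h j)) c) =
        g.mulVec ((g⁻¹ * N * g).mulVec (Pi.single j 1)) := by
      rw [← hNcol, ← hc]; rfl
    have h2 := congrArg (fun v => g⁻¹.mulVec v) h1
    simpa [Matrix.mulVec_mulVec, Matrix.nonsing_inv_mul _ hdet] using h2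
  have h3 := congrFun hceq i
  simp only [maskMap, LinearMap.coe_mk, AddHom.coe_mk, Matrix.mulVec_single, Pi.smul_apply, Matrix.col_apply, op_smul_eq_mul, mul_one] at h3
  rw [← h3, if_neg (not_le.mpr hij)]

end auxLemmas

/-- For the regular nilpotent Jordan block `N` and a Hessenberg function
`h`, there is `g` in the Bruhat cell `BwB` with `g⁻¹ N g` in the Hessenberg space iff
the cell `BwB/B` meets the Hessenberg variety `{flags V_• : N V_i ⊆ V_{h(i)}}` (flags
being recorded by column spans); and a necessary condition is `w⁻¹ α_i ∈ Φ_H` for every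
simple root, i.e. `w⁻¹(i) ≤ h(w⁻¹(i+1))` for all `i`. -/
theorem bruhat_cell_meets_hessenberg_variety
    (n : ℕ) (h : Fin n → Fin n) (hmono : Monotone h) (hge : ∀ i, i ≤ h i)
    (N : Matrix (Fin n) (Fin n) ℂ)
    (hN : N = Matrix.of fun i j => if i.val + 1 = j.val then (1 : ℂ) else 0)
    (w : Equiv.Perm (Fin n)) :
    ((∃ g ∈ bruhatCell n w, g⁻¹ * N * g ∈
        {A : Matrix (Fin n) (Fin n) ℂ | ∀ i j, h j < i → A i j = 0}) ↔
      (∃ g ∈ bruhatCell n w, ∀ i : Fin n,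
        Submodule.map N.mulVecLin (colSpan n g i) ≤ colSpan n g (h i))) ∧
    ((∃ g ∈ bruhatCell n w, g⁻¹ * N * g ∈
        {A : Matrix (Fin n) (Fin n) ℂ | ∀ i j, h j < i → A i j = 0}) →
      ∀ i : Fin n, ∀ hi : i.val + 1 < n,
        w⁻¹ i ≤ h (w⁻¹ ⟨i.val + 1, hi⟩)) := by
  have hUnit : ∀ g ∈ bruhatCell n w, IsUnit g := by
    rintro g ⟨b₁, hb₁, b₂, hb₂, rfl⟩
    exact (hb₁.1.mul (permMat_isUnit w)).mul hb₂.1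
  constructor
  · constructor
    · rintro ⟨g, hg, hA⟩
      exact ⟨g, hg, matrix_to_flag hmono (hUnit g hg) hA⟩
    · rintro ⟨g, hg, hF⟩
      exact ⟨g, hg, flag_to_matrix (hUnit g hg) hF⟩
  · rintro ⟨g, ⟨b₁, hb₁, b₂, hb₂, rfl⟩, hA⟩ i hi
    by_contra hcon
    push_neg at hcon
    have hdet1 : IsUnit b₁.det := (Matrix.isUnit_iff_isUnit_det _).mp hb₁.1
    have hdet2 : IsUnit b₂.det := (Matrix.isUnit_iff_isUnit_det _).mp hb₂.1
    have cancel₂ : b₂ * b₂⁻¹ = 1 := Matrix.mul_nonsing_inv _ hdet2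
    have hMeq : b₂ * ((b₁ * permMat n w * b₂)⁻¹ * N * (b₁ * permMat n w * b₂)) * b₂⁻¹ =
        permMat n w⁻¹ * (b₁⁻¹ * N * b₁) * permMat n w := by
      rw [Matrix.mul_inv_rev, Matrix.mul_inv_rev, permMat_inv]
      simp only [Matrix.mul_assoc, cancel₂, Matrix.mul_one]
      rw [← Matrix.mul_assoc b₂ b₂⁻¹, cancel₂, Matrix.one_mul]
    set i' : Fin n := ⟨i.val + 1, hi⟩ with hi'
    have hz : (permMat n w⁻¹ * (b₁⁻¹ * N * b₁) * permMat n w) (w⁻¹ i) (w⁻¹ i') = 0 := by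
      rw [← hMeq]
      exact hess_conj hmono hA hb₂.2 (upperBorel_inv hb₂).2 _ _ hcon
    rw [mul_permMat_apply, permMat_mul_apply] at hz
    simp only [inv_inv, Equiv.Perm.coe_inv, Equiv.apply_symm_apply] at hz
    exact conj_superdiag_ne_zero hb₁ hN i hi hz
end

section
/- Let N ∈ gl_n(ℂ) be the single Jordan block regular nilpotent and b the upper-triangular Borel subalgebra. The adjoint orbit of N under the Borel subgroup B (invertible upper-triangular matrices) is exactly the set of regular nilpotent elements of the nilradical n (strictly upper-triangular matrices), i.e., {gNg⁻¹ : g ∈ B} = {M strictly upper-triangular : M_{i,i+1} ≠ 0 for all 1 ≤ i ≤ n−1}. -/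
open Matrix Finset

/-- Powers of a strictly upper triangular matrix vanish below the k-th superdiagonal. -/
lemma aux_pow_entry_zero {n : ℕ} {M : Matrix (Fin n) (Fin n) ℂ}
    (hM : ∀ i j : Fin n, j ≤ i → M i j = 0) :
    ∀ (k : ℕ) (i j : Fin n), j.val < i.val + k → (M ^ k) i j = 0 := by
  intro k
  induction k with
  | zero =>
    intro i j h
    rw [pow_zero, Matrix.one_apply_ne]
    intro e; subst e; omega
  | succ k ih =>
    intro i j h
    rw [pow_succ', Matrix.mul_apply]
    apply Finset.sum_eq_zero
    intro l _
    by_cases hl : l ≤ i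
    · rw [hM i l hl, zero_mul]
    · push_neg at hl
      have : i.val < l.val := hl
      rw [ih l j (by omega), mul_zero]

/-- (M^k)_{i, i+k} is nonzero for strictly upper triangular M with
nonzero superdiagonal. -/
lemma aux_pow_entry_ne_zero {n : ℕ} {M : Matrix (Fin n) (Fin n) ℂ}
    (hM : ∀ i j : Fin n, j ≤ i → M i j = 0)
    (hs : ∀ i : Fin n, ∀ hi : i.val + 1 < n, M i ⟨i.val + 1, hi⟩ ≠ 0) :
    ∀ (k : ℕ) (i : Fin n) (h : i.val + k < n), (M ^ k) i ⟨i.val + k, h⟩ ≠ 0 := by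
  intro k
  induction k with
  | zero =>
    intro i h
    have : (⟨i.val + 0, h⟩ : Fin n) = i := by ext; simp
    rw [this, pow_zero, Matrix.one_apply_eq]
    exact one_ne_zero
  | succ k ih =>
    intro i h
    have h1 : i.val + 1 < n := by omega
    rw [pow_succ', Matrix.mul_apply]
    rw [Finset.sum_eq_single (⟨i.val + 1, h1⟩ : Fin n)]
    · have e : (⟨i.val + (k + 1), h⟩ : Fin n) = ⟨(⟨i.val + 1, h1⟩ : Fin n).val + k, by simpa using (by omega : i.val + 1 + k < n)⟩ := by
        ext; simp; omega
      rw [e]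
      exact mul_ne_zero (hs i h1) (ih ⟨i.val + 1, h1⟩ (by simpa using (by omega : i.val + 1 + k < n)))
    · intro l _ hl
      by_cases hli : l ≤ i
      · rw [hM i l hli, zero_mul]
      · push_neg at hli
        have h2 : i.val < l.val := hli
        have h3 : l.val ≠ i.val + 1 := by
          intro e; apply hl; ext; exact e
        rw [aux_pow_entry_zero hM k l _ (by simp; omega), mul_zero]
    · intro habs
      exact absurd (Finset.mem_univ _) habs

/-- Right multiplication by the Jordan block shifts columns. -/
lemma aux_mul_J {n : ℕ} (A : Matrix (Fin n) (Fin n) ℂ) (i j : Fin n) :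
    (A * Matrix.of fun i j : Fin n => if i.val + 1 = j.val then (1:ℂ) else 0) i j =
      if h : 0 < j.val then A i ⟨j.val - 1, by omega⟩ else 0 := by
  rw [Matrix.mul_apply]
  by_cases h : 0 < j.val
  · rw [dif_pos h, Finset.sum_eq_single (⟨j.val - 1, by omega⟩ : Fin n)]
    · simp; omega
    · intro k _ hk
      have : k.val + 1 ≠ j.val := by
        intro e; apply hk; ext; simp; omega
      simp [this]
    · intro habs; exact absurd (Finset.mem_univ _) habs
  · rw [dif_neg h]
    apply Finset.sum_eq_zero
    intro k _
    have : k.val + 1 ≠ j.val := by omega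
    simp [this]

/-- Strictly upper triangular times upper triangular. -/
lemma aux_strict_mul_upper {n : ℕ} {A B : Matrix (Fin n) (Fin n) ℂ}
    (hA : ∀ i j : Fin n, j ≤ i → A i j = 0) (hB : ∀ i j : Fin n, j < i → B i j = 0) :
    (∀ i j : Fin n, j ≤ i → (A * B) i j = 0) ∧
    (∀ (i : Fin n) (hi : i.val + 1 < n),
      (A * B) i ⟨i.val + 1, hi⟩ = A i ⟨i.val + 1, hi⟩ * B ⟨i.val + 1, hi⟩ ⟨i.val + 1, hi⟩) := by
  constructor
  · intro i j hij
    rw [Matrix.mul_apply]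
    apply Finset.sum_eq_zero
    intro k _
    by_cases hk : k ≤ i
    · rw [hA i k hk, zero_mul]
    · push_neg at hk
      rw [hB k j (lt_of_le_of_lt hij hk), mul_zero]
  · intro i hi
    rw [Matrix.mul_apply, Finset.sum_eq_single (⟨i.val + 1, hi⟩ : Fin n)]
    · intro k _ hk
      by_cases hki : k ≤ i
      · rw [hA i k hki, zero_mul]
      · push_neg at hki
        have h1 : i.val < k.val := hki
        have h2 : k.val ≠ i.val + 1 := fun e => hk (by ext; exact e)
        rw [hB k ⟨i.val + 1, hi⟩ (by simp only [Fin.lt_def]; omega), mul_zero]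
    · intro habs; exact absurd (Finset.mem_univ _) habs

/-- Upper triangular invertible matrices have nonzero diagonal. -/
lemma aux_diag_ne_zero {n : ℕ} {g : Matrix (Fin n) (Fin n) ℂ}
    (hg : g.det ≠ 0) (hgt : ∀ i j : Fin n, j < i → g i j = 0) (i : Fin n) :
    g i i ≠ 0 := by
  have hbt : g.BlockTriangular id := fun i j hij => hgt i j hij
  rw [Matrix.det_of_upperTriangular hbt] at hg
  exact Finset.prod_ne_zero_iff.mp hg i (Finset.mem_univ i)


/-- The orbit of the single Jordan block `N` under conjugation by the
Borel subgroup `B` of invertible upper-triangular matrices is exactly the set of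
regular nilpotent elements of the nilradical: the strictly upper-triangular matrices
with all superdiagonal entries nonzero. -/
theorem borel_orbit_of_jordan_block (n : ℕ) (hn : 1 ≤ n) :
    let J : Matrix (Fin n) (Fin n) ℂ :=
      Matrix.of fun i j => if i.val + 1 = j.val then 1 else 0
    {M : Matrix (Fin n) (Fin n) ℂ |
        ∃ g : Matrix (Fin n) (Fin n) ℂ, IsUnit g ∧
          (∀ i j : Fin n, j < i → g i j = 0) ∧ M = g * J * g⁻¹} =
      {M : Matrix (Fin n) (Fin n) ℂ |
        (∀ i j : Fin n, j ≤ i → M i j = 0) ∧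
        ∀ i : Fin n, ∀ hi : i.val + 1 < n, M i ⟨i.val + 1, hi⟩ ≠ 0} := by
  intro J
  have hJ : J = Matrix.of fun i j : Fin n => if i.val + 1 = j.val then (1:ℂ) else 0 := rfl
  ext M
  simp only [Set.mem_setOf_eq]
  constructor
  · rintro ⟨g, hg, hgt, rfl⟩
    have hdet : g.det ≠ 0 := ((Matrix.isUnit_iff_isUnit_det g).mp hg).ne_zero
    have hdetinv : g⁻¹.det ≠ 0 := by
      rw [Matrix.det_nonsing_inv, Ring.inverse_eq_inv']
      exact inv_ne_zero hdet
    have hinvt : ∀ i j : Fin n, j < i → g⁻¹ i j = 0 := by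
      obtain ⟨_⟩ := hg.nonempty_invertible
      have := Matrix.blockTriangular_inv_of_blockTriangular
        (M := g) (b := id) (fun i j hij => hgt i j hij)
      exact fun i j hij => this hij
    have hAstrict : ∀ i j : Fin n, j ≤ i → (g * J) i j = 0 := by
      intro i j hij
      rw [hJ, aux_mul_J]
      split_ifs with h
      · exact hgt i _ (by simp only [Fin.lt_def]; have : j.val ≤ i.val := hij; simp; omega)
      · rfl
    have hAsup : ∀ (i : Fin n) (hi : i.val + 1 < n),
        (g * J) i ⟨i.val + 1, hi⟩ = g i i := by
      intro i hi
      rw [hJ, aux_mul_J, dif_pos (by simp)]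
      have e : (⟨i.val + 1 - 1, by omega⟩ : Fin n) = i := by ext; simp
      exact congrArg (g i) e
    obtain ⟨hzero, hsup⟩ := aux_strict_mul_upper hAstrict hinvt
    refine ⟨hzero, fun i hi => ?_⟩
    rw [hsup i hi, hAsup i hi]
    exact mul_ne_zero (aux_diag_ne_zero hdet hgt i)
      (aux_diag_ne_zero hdetinv hinvt ⟨i.val + 1, hi⟩)
  · rintro ⟨hM, hs⟩
    set g : Matrix (Fin n) (Fin n) ℂ :=
      Matrix.of fun i j : Fin n => (M ^ (n - 1 - j.val)) i ⟨n - 1, by omega⟩ with hgdef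
    have hgt : ∀ i j : Fin n, j < i → g i j = 0 := by
      intro i j hij
      have h1 : j.val < i.val := hij
      have h2 : i.val < n := i.isLt
      exact aux_pow_entry_zero hM _ i _ (by simp; omega)
    have hgd : ∀ j : Fin n, g j j ≠ 0 := by
      intro j
      have hjn : j.val < n := j.isLt
      have h2 : j.val + (n - 1 - j.val) < n := by omega
      have e : (⟨n - 1, by omega⟩ : Fin n) = ⟨j.val + (n - 1 - j.val), h2⟩ := by
        ext; simp; omega
      show (M ^ (n - 1 - j.val)) j ⟨n - 1, by omega⟩ ≠ 0
      rw [e]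
      exact aux_pow_entry_ne_zero hM hs _ j h2
    have hdet : g.det ≠ 0 := by
      rw [Matrix.det_of_upperTriangular (fun i j h => hgt i j h)]
      exact Finset.prod_ne_zero_iff.mpr fun i _ => hgd i
    have hgu : IsUnit g := (Matrix.isUnit_iff_isUnit_det g).mpr (isUnit_iff_ne_zero.mpr hdet)
    have hcomm : M * g = g * J := by
      ext i j
      have hjn : j.val < n := j.isLt
      have hL : (M * g) i j = (M ^ (n - j.val)) i ⟨n - 1, by omega⟩ := by
        have hp : (M ^ (n - j.val)) = M * M ^ (n - 1 - j.val) := by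
          rw [← pow_succ']
          congr 1
          omega
        rw [hp, Matrix.mul_apply, Matrix.mul_apply]
        rfl
      rw [hL, hJ, aux_mul_J]
      split_ifs with h
      · show _ = (M ^ (n - 1 - (j.val - 1))) i ⟨n - 1, by omega⟩
        have he : n - j.val = n - 1 - (j.val - 1) := by omega
        rw [he]
      · have h0 : j.val = 0 := by omega
        rw [h0]
        exact aux_pow_entry_zero hM n i _ (by simp; omega)
    refine ⟨g, hgu, hgt, ?_⟩
    calc M = M * (g * g⁻¹) := by
            rw [Matrix.mul_nonsing_inv g (isUnit_iff_ne_zero.mpr hdet), mul_one]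
      _ = (M * g) * g⁻¹ := by rw [mul_assoc]
      _ = g * J * g⁻¹ := by rw [hcomm]
end

section
/- Fix n ≥ 2, the Jordan block N ∈ gl_n(ℂ), and the Hessenberg function h(i) = min(i+1, n) (so H = matrices A with A_{ij} = 0 for i > j+1). Then the Hessenberg variety H(N,H) = {flags V_• : N V_i ⊆ V_{i+1} for all i} contains the standard flag E_• (E_i = span(e_1,...,e_i)), and the intersection of H(N,H) with the open Bruhat cell B w_0 B/B (w_0 the longest permutation) is nonempty of dimension n−1. -/
namespace Hess19
open Matrix

noncomputable section

def Nm (n : ℕ) : Matrix (Fin n) (Fin n) ℂ :=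
  Matrix.of fun i j => if i.val + 1 = j.val then 1 else 0

def Wm (n : ℕ) : Matrix (Fin n) (Fin n) ℂ :=
  Matrix.of fun i j => if i.val + j.val + 1 = n then 1 else 0

variable {n : ℕ}

lemma wm_apply (i j : Fin n) : Wm n i j = if j = Fin.rev i then 1 else 0 := by
  have h : (i.val + j.val + 1 = n) ↔ j = Fin.rev i := by
    rw [Fin.ext_iff, Fin.val_rev]
    have := i.isLt; have := j.isLt
    omega
  simp [Wm, h]

lemma wm_apply' (i j : Fin n) : Wm n i j = if i = Fin.rev j then 1 else 0 := by
  have h : (i.val + j.val + 1 = n) ↔ i = Fin.rev j := by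
    rw [Fin.ext_iff, Fin.val_rev]
    have := i.isLt; have := j.isLt
    omega
  simp [Wm, h]

lemma Wm_mul_apply (X : Matrix (Fin n) (Fin n) ℂ) (i j : Fin n) :
    (Wm n * X) i j = X (Fin.rev i) j := by
  simp [Matrix.mul_apply, wm_apply, ite_mul, Finset.sum_ite_eq, Finset.sum_ite_eq']

lemma mul_Wm_apply (X : Matrix (Fin n) (Fin n) ℂ) (i j : Fin n) :
    (X * Wm n) i j = X i (Fin.rev j) := by
  simp [Matrix.mul_apply, wm_apply', mul_ite, Finset.sum_ite_eq, Finset.sum_ite_eq']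

lemma Wm_mul_Wm : Wm n * Wm n = 1 := by
  ext i j
  rw [Wm_mul_apply, wm_apply, Matrix.one_apply, Fin.rev_rev]
  simp [eq_comm]

lemma Wm_inv : (Wm n)⁻¹ = Wm n := Matrix.inv_eq_right_inv Wm_mul_Wm

lemma conj_Wm_apply (X : Matrix (Fin n) (Fin n) ℂ) (i j : Fin n) :
    (Wm n * X * Wm n) i j = X (Fin.rev i) (Fin.rev j) := by
  rw [mul_Wm_apply, Wm_mul_apply]

lemma Nm_mul_apply (u : Matrix (Fin n) (Fin n) ℂ) (i j : Fin n) :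
    (Nm n * u) i j = if h : i.val + 1 < n then u ⟨i.val + 1, h⟩ j else 0 := by
  rw [Matrix.mul_apply]
  split_ifs with h
  · rw [Finset.sum_eq_single (⟨i.val + 1, h⟩ : Fin n)]
    · simp [Nm]
    · intro k _ hk
      have hne : ¬ (i.val + 1 = k.val) := fun hc => hk (Fin.ext hc.symm)
      simp [Nm, hne]
    · simp
  · apply Finset.sum_eq_zero
    intro k _
    have hne : ¬ (i.val + 1 = k.val) := by have := k.isLt; omega
    simp [Nm, hne]

lemma mul_Nm_apply (u : Matrix (Fin n) (Fin n) ℂ) (i j : Fin n) :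
    (u * Nm n) i j =
      if h : 1 ≤ j.val then u i ⟨j.val - 1, Nat.lt_of_le_of_lt (Nat.sub_le j.val 1) j.isLt⟩
      else 0 := by
  rw [Matrix.mul_apply]
  split_ifs with h
  · rw [Finset.sum_eq_single (⟨j.val - 1, Nat.lt_of_le_of_lt (Nat.sub_le j.val 1) j.isLt⟩ : Fin n)]
    · simp only [Nm, Matrix.of_apply]
      rw [if_pos (by omega), mul_one]
    · intro k _ hk
      have hne : ¬ (k.val + 1 = j.val) := by
        intro hc
        exact hk (Fin.ext (show k.val = j.val - 1 by omega))
      simp [Nm, hne]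
    · simp
  · apply Finset.sum_eq_zero
    intro k _
    have hne : ¬ (k.val + 1 = j.val) := by omega
    simp [Nm, hne]


/-- coefficient sequence of a unipotent upper-triangular Toeplitz matrix -/
def coef (n : ℕ) (a : Fin (n - 1) → ℂ) : ℕ → ℂ := fun k =>
  if k = 0 then 1 else if h : k - 1 < n - 1 then a ⟨k - 1, h⟩ else 0

/-- the unipotent upper-triangular Toeplitz matrix with coefficients `a` -/
def Tm (n : ℕ) (a : Fin (n - 1) → ℂ) : Matrix (Fin n) (Fin n) ℂ :=
  Matrix.of fun i j => if i.val ≤ j.val then coef n a (j.val - i.val) else 0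

lemma Tm_tri (a : Fin (n - 1) → ℂ) {i j : Fin n} (h : j < i) : Tm n a i j = 0 := by
  have hv : j.val < i.val := h
  simp only [Tm, Matrix.of_apply]
  exact if_neg (by omega)

lemma Tm_diag (a : Fin (n - 1) → ℂ) (i : Fin n) : Tm n a i i = 1 := by
  simp [Tm, coef]

lemma Tm_comm (a : Fin (n - 1) → ℂ) : Nm n * Tm n a = Tm n a * Nm n := by
  ext i j
  rw [Nm_mul_apply, mul_Nm_apply]
  have hi := i.isLt; have hj := j.isLt
  simp only [Tm, Matrix.of_apply]
  by_cases h1 : i.val + 1 < n <;> by_cases h2 : 1 ≤ j.val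
  · rw [dif_pos h1, dif_pos h2]
    by_cases h3 : i.val + 1 ≤ j.val
    · rw [if_pos h3, if_pos (by omega)]
      congr 1
      omega
    · rw [if_neg h3, if_neg (by omega)]
  · rw [dif_pos h1, dif_neg h2, if_neg (by omega)]
  · rw [dif_neg h1, dif_pos h2, if_neg (by omega)]
  · rw [dif_neg h1, dif_neg h2]

lemma utri_blockTriangular {u : Matrix (Fin n) (Fin n) ℂ}
    (h1 : ∀ i j : Fin n, j < i → u i j = 0) : u.BlockTriangular id :=
  fun i j hij => h1 i j hij

lemma utri_det {u : Matrix (Fin n) (Fin n) ℂ}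
    (h1 : ∀ i j : Fin n, j < i → u i j = 0) (h2 : ∀ i : Fin n, u i i = 1) :
    IsUnit u.det := by
  rw [Matrix.det_of_upperTriangular (utri_blockTriangular h1)]
  simp [h2]

/-- conjugating a commuting unipotent matrix and flipping gives entries of `Wm * Nm * Wm`. -/
lemma third_of_comm {u : Matrix (Fin n) (Fin n) ℂ}
    (h1 : ∀ i j : Fin n, j < i → u i j = 0) (h2 : ∀ i : Fin n, u i i = 1)
    (hc : Nm n * u = u * Nm n) :
    ∀ i j : Fin n, j.val + 1 < i.val → ((u * Wm n)⁻¹ * Nm n * (u * Wm n)) i j = 0 := by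
  intro i j hij
  have hdet := utri_det h1 h2
  have huv : u⁻¹ * u = 1 := Matrix.nonsing_inv_mul u hdet
  have hconj : u⁻¹ * Nm n * u = Nm n := by
    calc u⁻¹ * Nm n * u = u⁻¹ * (Nm n * u) := by rw [mul_assoc]
    _ = u⁻¹ * (u * Nm n) := by rw [hc]
    _ = (u⁻¹ * u) * Nm n := by rw [mul_assoc]
    _ = Nm n := by rw [huv, one_mul]
  have : (u * Wm n)⁻¹ * Nm n * (u * Wm n) = Wm n * Nm n * Wm n := by
    rw [Matrix.mul_inv_rev, Wm_inv]
    calc Wm n * u⁻¹ * Nm n * (u * Wm n) = Wm n * (u⁻¹ * Nm n * u) * Wm n := by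
          simp only [mul_assoc]
    _ = Wm n * Nm n * Wm n := by rw [hconj]
  rw [this, conj_Wm_apply]
  have hi := i.isLt; have hj := j.isLt
  simp only [Nm, Matrix.of_apply, Fin.val_rev]
  rw [if_neg (by omega)]

/-- the hard direction: a unitriangular matrix in `S` commutes with `N`. -/
lemma comm_of_third {u : Matrix (Fin n) (Fin n) ℂ}
    (h1 : ∀ i j : Fin n, j < i → u i j = 0) (h2 : ∀ i : Fin n, u i i = 1)
    (h3 : ∀ i j : Fin n, j.val + 1 < i.val → ((u * Wm n)⁻¹ * Nm n * (u * Wm n)) i j = 0) :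
    Nm n * u = u * Nm n := by
  have hdet := utri_det h1 h2
  have huv : u * u⁻¹ = 1 := Matrix.mul_nonsing_inv u hdet
  haveI := u.invertibleOfIsUnitDet hdet
  have hinvtri : u⁻¹.BlockTriangular id :=
    Matrix.blockTriangular_inv_of_blockTriangular (utri_blockTriangular h1)
  set A := u⁻¹ * Nm n * u with hAdef
  -- entries far above the diagonal vanish
  have hA : ∀ p q : Fin n, p.val + 1 < q.val → A p q = 0 := by
    intro p q hpq
    have hi := p.isLt; have hj := q.isLt
    have hrev : (Fin.rev q).val + 1 < (Fin.rev p).val := by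
      rw [Fin.val_rev, Fin.val_rev]; omega
    have := h3 (Fin.rev p) (Fin.rev q) hrev
    rw [Matrix.mul_inv_rev, Wm_inv] at this
    have heq : Wm n * u⁻¹ * Nm n * (u * Wm n) = Wm n * A * Wm n := by
      rw [hAdef]; simp only [mul_assoc]
    rw [heq, conj_Wm_apply, Fin.rev_rev, Fin.rev_rev] at this
    exact this
  -- entries on or below the diagonal vanish
  have hA2 : ∀ p q : Fin n, q.val ≤ p.val → A p q = 0 := by
    intro p q hpq
    have : A = u⁻¹ * (Nm n * u) := by rw [hAdef, mul_assoc]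
    rw [this, Matrix.mul_apply]
    apply Finset.sum_eq_zero
    intro k _
    rcases lt_or_ge k.val p.val with hk | hk
    · rw [hinvtri (show (id k : Fin n) < id p from hk), zero_mul]
    · rw [Nm_mul_apply]
      split_ifs with h
      · have hlt : q < (⟨k.val + 1, h⟩ : Fin n) := by
          rw [Fin.lt_iff_val_lt_val]
          show q.val < k.val + 1
          omega
        rw [h1 _ q hlt, mul_zero]
      · rw [mul_zero]
  have hA0 : ∀ p q : Fin n, q.val ≠ p.val + 1 → A p q = 0 := by
    intro p q h
    rcases le_or_gt q.val p.val with hle | hlt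
    · exact hA2 p q hle
    · exact hA p q (by omega)
  have hNA : u * A = Nm n * u := by
    rw [hAdef]
    calc u * (u⁻¹ * Nm n * u) = (u * u⁻¹) * Nm n * u := by simp only [mul_assoc]
    _ = Nm n * u := by rw [huv, one_mul]
  have hA1 : ∀ p : Fin n, (hp : p.val + 1 < n) → A p ⟨p.val + 1, hp⟩ = 1 := by
    intro p hp
    have := congrFun (congrFun hNA p) ⟨p.val + 1, hp⟩
    rw [Matrix.mul_apply] at this
    rw [Finset.sum_eq_single p] at this
    · rw [h2 p, one_mul] at this
      rw [this, Nm_mul_apply, dif_pos hp, h2]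
    · intro k _ hk
      have hne : ((⟨p.val + 1, hp⟩ : Fin n)).val ≠ k.val + 1 := by
        show p.val + 1 ≠ k.val + 1
        exact fun hc => hk (Fin.ext (by omega))
      rw [hA0 k _ hne, mul_zero]
    · simp
  have hAN : A = Nm n := by
    ext p q
    by_cases hq : q.val = p.val + 1
    · have hp : p.val + 1 < n := hq ▸ q.isLt
      have : q = ⟨p.val + 1, hp⟩ := Fin.ext hq
      rw [this, hA1 p hp]
      simp [Nm]
    · rw [hA0 p q hq]
      simp only [Nm, Matrix.of_apply]
      rw [if_neg (by omega)]
  calc Nm n * u = u * A := hNA.symm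
  _ = u * Nm n := by rw [hAN]


lemma comm_step {u : Matrix (Fin n) (Fin n) ℂ} (hc : Nm n * u = u * Nm n)
    (i j : Fin n) (hi1 : i.val + 1 < n) (hj1 : 1 ≤ j.val) :
    u ⟨i.val + 1, hi1⟩ j
      = u i ⟨j.val - 1, Nat.lt_of_le_of_lt (Nat.sub_le j.val 1) j.isLt⟩ := by
  have h := congrFun (congrFun hc i) j
  rw [Nm_mul_apply, mul_Nm_apply, dif_pos hi1, dif_pos hj1] at h
  exact h

lemma toeplitz {u : Matrix (Fin n) (Fin n) ℂ} (hc : Nm n * u = u * Nm n) :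
    ∀ (m : ℕ) (i j : Fin n), i.val = m → i.val ≤ j.val →
      u i j = u ⟨0, lt_of_le_of_lt (Nat.zero_le _) i.isLt⟩
        ⟨j.val - i.val, lt_of_le_of_lt (Nat.sub_le _ _) j.isLt⟩ := by
  intro m
  induction m with
  | zero =>
    intro i j hi hij
    congr 1
    · exact Fin.ext hi
    · exact Fin.ext (by simp; omega)
  | succ m ih =>
    intro i j hi hij
    have hiv := i.isLt; have hjv := j.isLt
    have hj1 : 1 ≤ j.val := by omega
    have hlt : i.val - 1 < n := by omega
    have hlt2 : (⟨i.val - 1, hlt⟩ : Fin n).val + 1 < n := by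
      show i.val - 1 + 1 < n; omega
    have key := comm_step hc ⟨i.val - 1, hlt⟩ j hlt2 hj1
    have e : (⟨(⟨i.val - 1, hlt⟩ : Fin n).val + 1, hlt2⟩ : Fin n) = i :=
      Fin.ext (by show i.val - 1 + 1 = i.val; omega)
    rw [e] at key
    rw [key, ih ⟨i.val - 1, hlt⟩ ⟨j.val - 1, _⟩ (by show i.val - 1 = m; omega)
      (by show i.val - 1 ≤ j.val - 1; omega)]
    congr 1
    exact Fin.ext (by show j.val - 1 - (i.val - 1) = j.val - i.val; omega)

def Sset (n : ℕ) : Set (Matrix (Fin n) (Fin n) ℂ) :=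
  {u | (∀ i j : Fin n, j < i → u i j = 0) ∧ (∀ i : Fin n, u i i = 1) ∧
    ∀ i j : Fin n, j.val + 1 < i.val → ((u * Wm n)⁻¹ * Nm n * (u * Wm n)) i j = 0}

lemma Tm_mem (n : ℕ) (a : Fin (n - 1) → ℂ) : Tm n a ∈ Sset n :=
  ⟨fun _ _ h => Tm_tri a h, Tm_diag a,
    third_of_comm (fun _ _ h => Tm_tri a h) (Tm_diag a) (Tm_comm a)⟩

lemma coef_continuous (d : ℕ) : Continuous fun a : Fin (n - 1) → ℂ => coef n a d := by
  by_cases h : d = 0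
  · simp only [coef, if_pos h]
    exact continuous_const
  · by_cases h2 : d - 1 < n - 1
    · simp only [coef, if_neg h, dif_pos h2]
      exact continuous_apply _
    · simp only [coef, if_neg h, dif_neg h2]
      exact continuous_const

theorem cell_part (n : ℕ) (hn : 2 ≤ n) :
    (Sset n).Nonempty ∧ Nonempty (Sset n ≃ₜ (Fin (n - 1) → ℂ)) := by
  have h0 : 0 < n := by omega
  refine ⟨⟨Tm n 0, Tm_mem n 0⟩, ⟨?_⟩⟩
  refine Homeomorph.mk (Equiv.mk
      (fun u k => u.val ⟨0, h0⟩ ⟨k.val + 1, by have := k.isLt; omega⟩)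
      (fun a => ⟨Tm n a, Tm_mem n a⟩) ?_ ?_) ?_ ?_
  · -- left inverse
    rintro ⟨u, hu1, hu2, hu3⟩
    apply Subtype.ext
    have hc := comm_of_third hu1 hu2 hu3
    show Tm n _ = u
    ext i j
    simp only [Tm, Matrix.of_apply]
    by_cases hij : i.val ≤ j.val
    · rw [if_pos hij]
      by_cases hdd : j.val - i.val = 0
      · have hij' : i = j := Fin.ext (by omega)
        rw [hdd, hij']
        simpa [coef] using (hu2 j).symm
      · have hd2 : j.val - i.val - 1 < n - 1 := by
          have := j.isLt; omega
        simp only [coef, if_neg hdd, dif_pos hd2]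
        have htp := toeplitz hc i.val i j rfl hij
        rw [htp]
        congr 1
        exact Fin.ext (by show j.val - i.val - 1 + 1 = j.val - i.val; omega)
    · rw [if_neg hij]
      exact (hu1 i j (by omega)).symm
  · -- right inverse
    intro a
    funext k
    have hk := k.isLt
    show Tm n a ⟨0, h0⟩ ⟨k.val + 1, by omega⟩ = a k
    simp only [Tm, Matrix.of_apply]
    rw [if_pos (by show 0 ≤ k.val + 1; omega)]
    show coef n a (k.val + 1 - 0) = a k
    have : k.val + 1 - 0 = k.val + 1 := by omega
    rw [this]
    simp only [coef, if_neg (Nat.succ_ne_zero k.val), Nat.add_sub_cancel, dif_pos hk]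
  · -- continuity of toFun
    exact continuous_pi fun k => continuous_subtype_val.matrix_elem _ _
  · -- continuity of invFun
    apply Continuous.subtype_mk
    apply continuous_matrix
    intro i j
    simp only [Tm, Matrix.of_apply]
    by_cases h : i.val ≤ j.val
    · simp only [if_pos h]
      exact coef_continuous _
    · simp only [if_neg h]
      exact continuous_const

theorem flag_part (n : ℕ) :
    ∀ i : ℕ, Submodule.map (Nm n).mulVecLin
      (Submodule.span ℂ ((fun j : Fin n => (Pi.single j 1 : Fin n → ℂ)) '' {j | j.val < i}))
      ≤ Submodule.span ℂ
        ((fun j : Fin n => (Pi.single j 1 : Fin n → ℂ)) '' {j | j.val < min (i + 1) n}) := by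
  intro i
  rw [Submodule.map_span]
  apply Submodule.span_le.mpr
  rintro x ⟨y, ⟨j, hj, rfl⟩, rfl⟩
  have hjv := j.isLt
  have hj' : j.val < i := hj
  by_cases h : 1 ≤ j.val
  · have hx : (Nm n).mulVecLin (Pi.single j 1)
        = Pi.single (⟨j.val - 1, by omega⟩ : Fin n) (1 : ℂ) := by
      funext p
      simp only [Matrix.mulVecLin_apply, Matrix.mulVec_single, mul_one]
      rw [Pi.single_apply]
      have : (p.val + 1 = j.val) ↔ p = ⟨j.val - 1, by omega⟩ := by
        rw [Fin.ext_iff]; show _ ↔ p.val = j.val - 1; omega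
      simp only [Nm, Pi.smul_apply, Matrix.col_apply, op_smul_eq_mul, mul_one, Matrix.of_apply]
      rw [if_congr this rfl rfl]
    rw [hx]
    exact Submodule.subset_span ⟨⟨j.val - 1, by omega⟩, by show j.val - 1 < min (i + 1) n; omega, rfl⟩
  · have hx : (Nm n).mulVecLin (Pi.single j 1) = 0 := by
      funext p
      simp only [Matrix.mulVecLin_apply, Matrix.mulVec_single, mul_one]
      have : ¬ (p.val + 1 = j.val) := by omega
      simp [Nm, this]
    rw [hx]
    exact zero_mem _

end
end Hess19



/-- For the Jordan block `N` and the Hessenberg function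
`h(i) = min(i+1, n)` (so `H` is the space of matrices vanishing below the first
subdiagonal), the Hessenberg variety `{V_• : N V_i ⊆ V_{i+1}}` contains the standard
flag, and its intersection with the open Bruhat cell `B w₀ B / B` (modelled by the
unipotent coordinates `u` with `u w₀ B` in the cell) is nonempty of dimension `n - 1`,
i.e. homeomorphic to `ℂ^{n-1}`. -/
theorem regular_nilpotent_hessenberg_open_cell (n : ℕ) (hn : 2 ≤ n) :
    let N : Matrix (Fin n) (Fin n) ℂ :=
      Matrix.of fun i j => if i.val + 1 = j.val then 1 else 0
    -- the standard flag `E_i = span(e_1, …, e_i)`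
    let E : ℕ → Submodule ℂ (Fin n → ℂ) := fun i =>
      Submodule.span ℂ ((fun j : Fin n => (Pi.single j 1 : Fin n → ℂ)) '' {j | j.val < i})
    -- the permutation matrix of the longest element `w₀`
    let W₀ : Matrix (Fin n) (Fin n) ℂ :=
      Matrix.of fun i j => if i.val + j.val + 1 = n then 1 else 0
    -- unipotent coordinates for the intersection of `H(N,H)` with the open cell `B w₀ B / B`
    let S : Set (Matrix (Fin n) (Fin n) ℂ) :=
      {u | (∀ i j : Fin n, j < i → u i j = 0) ∧ (∀ i : Fin n, u i i = 1) ∧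
        ∀ i j : Fin n, j.val + 1 < i.val → ((u * W₀)⁻¹ * N * (u * W₀)) i j = 0}
    -- the standard flag lies in the Hessenberg variety, and the intersection with the
    -- open cell is nonempty of dimension `n - 1`
    (∀ i : ℕ, Submodule.map N.mulVecLin (E i) ≤ E (min (i + 1) n)) ∧
    S.Nonempty ∧ Nonempty (S ≃ₜ (Fin (n - 1) → ℂ)) := by
  intro N E W₀ S
  exact ⟨Hess19.flag_part n, (Hess19.cell_part n hn).1, (Hess19.cell_part n hn).2⟩
end
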